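/- For every 𝒯-category (X,a), the inclusion 𝒯-functor i_X: X̂ ↪ V^{|X|} has a left adjoint R_X: V^{|X|} → X̂ given by R_X(ψ)(𝔵) = ⋁_{𝔶∈TX} ψ(𝔶) ⊗ r(𝔵,𝔶), where r = T_ξ a · m_X°. -/

import Mathlib

/-!
`R_X ψ` is the composite `ψ ∘ a` of `ψ` with the structure of `(X,a)`. Reflexivity of `a`
gives `ψ ≤ R_X ψ`, and `φ ∘ a ≤ φ` gives `R_X φ ≤ φ` for a presheaf `φ`; as `⟦𝔭,-⟧` is
monotone, these are the unit and the counit. Transitivity of `a` makes `R_X ψ` an `a`-module,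
while the module condition on the `G`-side is reflexivity of `⟦-,-⟧` at `R_X ψ`. Finally `R_X`
is a `𝒯`-functor: the (BC) conditions and naturality of `ξ_X` move the supremum defining
`R_X ψ` out of `ξ`, after which every term is bounded by evaluation against `⟦-,-⟧`
followed by `r`.
-/

universe u

namespace Paper

/-- A strict topological theory `𝒯 = (𝕋, V, ξ)`: a commutative unital quantale `V`
(a complete lattice with a commutative monoid structure whose multiplication preserves
suprema in each variable, with `⊥ < k`), a `Set`-monad `𝕋 = (T, e, m)` such that `T`
sends pullbacks to weak pullbacks and the naturality squares of `m` are weak pullbacks,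
and a `𝕋`-algebra structure `ξ : T V → V` for which `⊗` and `k` are `𝕋`-algebra
homomorphisms and `ξ_X := ξ ∘ T(-)` is a (monotone) natural transformation
`P_V → P_V T`. -/
structure TopTheory (V : Type u) [CompleteLattice V] (T : Type u → Type u) where
  tens : V → V → V
  unit : V
  tens_comm : ∀ u v : V, tens u v = tens v u
  tens_assoc : ∀ u v w : V, tens (tens u v) w = tens u (tens v w)
  unit_tens : ∀ v : V, tens unit v = v
  tens_sSup : ∀ (u : V) (S : Set V), tens u (sSup S) = ⨆ v ∈ S, tens u v
  bot_lt_unit : (⊥ : V) < unit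
  map : ∀ {X Y : Type u}, (X → Y) → T X → T Y
  map_id : ∀ {X : Type u}, map (id : X → X) = id
  map_comp : ∀ {X Y Z : Type u} (g : Y → Z) (f : X → Y) (𝔵 : T X),
    map (g ∘ f) 𝔵 = map g (map f 𝔵)
  e : ∀ {X : Type u}, X → T X
  m : ∀ {X : Type u}, T (T X) → T X
  e_nat : ∀ {X Y : Type u} (f : X → Y) (x : X), map f (e x) = e (f x)
  m_nat : ∀ {X Y : Type u} (f : X → Y) (𝔛 : T (T X)), map f (m 𝔛) = m (map (map f) 𝔛)
  m_e : ∀ {X : Type u} (𝔵 : T X), m (e 𝔵) = 𝔵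
  m_map_e : ∀ {X : Type u} (𝔵 : T X), m (map e 𝔵) = 𝔵
  m_assoc : ∀ {X : Type u} (𝔜 : T (T (T X))), m (m 𝔜) = m (map m 𝔜)
  /-- (BC): `T` sends pullbacks to weak pullbacks. -/
  map_bc : ∀ {X Y Z : Type u} (f : X → Z) (g : Y → Z) (𝔵 : T X) (𝔶 : T Y),
    map f 𝔵 = map g 𝔶 →
    ∃ 𝔴 : T {p : X × Y // f p.1 = g p.2},
      map (fun p => p.1.1) 𝔴 = 𝔵 ∧ map (fun p => p.1.2) 𝔴 = 𝔶
  /-- (BC): every naturality square of `m` is a weak pullback. -/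
  m_bc : ∀ {X Y : Type u} (f : X → Y) (𝔜 : T (T Y)) (𝔵 : T X),
    m 𝔜 = map f 𝔵 → ∃ 𝔛 : T (T X), map (map f) 𝔛 = 𝔜 ∧ m 𝔛 = 𝔵
  xi : T V → V
  xi_e : ∀ v : V, xi (e v) = v
  xi_m : ∀ 𝔙 : T (T V), xi (m 𝔙) = xi (map xi 𝔙)
  /-- `k : 1 → V` is a `𝕋`-algebra homomorphism. -/
  xi_unit : ∀ {X : Type u} (𝔵 : T X), xi (map (fun _ => unit) 𝔵) = unit
  /-- `⊗ : V × V → V` is a `𝕋`-algebra homomorphism. -/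
  xi_tens : ∀ 𝔴 : T (V × V),
    xi (map (fun p => tens p.1 p.2) 𝔴) = tens (xi (map Prod.fst 𝔴)) (xi (map Prod.snd 𝔴))
  /-- each component `ξ_X : V^X → V^{T X}` is monotone. -/
  xi_mono : ∀ {X : Type u} (φ φ' : X → V), (∀ x, φ x ≤ φ' x) →
    ∀ 𝔵 : T X, xi (map φ 𝔵) ≤ xi (map φ' 𝔵)
  /-- `ξ_X` is a natural transformation `P_V → P_V T`. -/
  xi_nat : ∀ {X Y : Type u} (f : X → Y) (φ : X → V) (𝔶 : T Y),
    (⨆ 𝔵 : {𝔵 : T X // map f 𝔵 = 𝔶}, xi (map φ 𝔵.1)) =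
      xi (map (fun y => ⨆ x : {x : X // f x = y}, φ x.1) 𝔶)

namespace TopTheory

variable {V : Type u} [CompleteLattice V] {T : Type u → Type u}

/-- The internal hom of the quantale: `u ⊗ (-) ⊣ hom (u, -)`. -/
def ihom (𝒯 : TopTheory V T) (u w : V) : V := sSup {z | 𝒯.tens u z ≤ w}

/-- The extension `T_ξ` of `T : Set → Set` to `V`-relations. -/
def Txi (𝒯 : TopTheory V T) {X Y : Type u} (r : X → Y → V) (𝔵 : T X) (𝔶 : T Y) : V :=
  ⨆ 𝔴 : {w : T (X × Y) // 𝒯.map Prod.fst w = 𝔵 ∧ 𝒯.map Prod.snd w = 𝔶},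
    𝒯.xi (𝒯.map (fun p => r p.1 p.2) 𝔴.1)

/-- Kleisli convolution `β ∘ α = β · T_ξ α · m_X°` of `𝒯`-relations
`α : X ⇸ Y` and `β : Y ⇸ Z`. -/
def kleisli (𝒯 : TopTheory V T) {X Y Z : Type u}
    (β : T Y → Z → V) (α : T X → Y → V) (𝔵 : T X) (z : Z) : V :=
  ⨆ 𝔛 : {𝔛 : T (T X) // 𝒯.m 𝔛 = 𝔵}, ⨆ 𝔶 : T Y, 𝒯.tens (𝒯.Txi α 𝔛.1 𝔶) (β 𝔶 z)

/-- The `𝒯`-relation `e_X° : X ⇸ X`. -/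
def unitRel (𝒯 : TopTheory V T) (X : Type u) (𝔵 : T X) (x : X) : V :=
  ⨆ _ : 𝔵 = 𝒯.e x, 𝒯.unit

/-- A `𝒯`-category structure on `X`: a `𝒯`-relation `a : X ⇸ X` with
`e_X° ≤ a` and `a ∘ a ≤ a`. -/
structure TCatStr (𝒯 : TopTheory V T) (X : Type u) where
  rel : T X → X → V
  le_refl : ∀ x : X, 𝒯.unit ≤ rel (𝒯.e x) x
  comp : ∀ (𝔵 : T X) (x : X), 𝒯.kleisli rel rel 𝔵 x ≤ rel 𝔵 x

/-- The `𝒯`-module conditions `φ ∘ a ≤ φ` and `b ∘ φ ≤ φ` for a `𝒯`-relation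
`φ : X ⇸ Y` between (structures underlying) `𝒯`-categories `(X,a)` and `(Y,b)`. -/
def IsTModRel (𝒯 : TopTheory V T) {X Y : Type u}
    (a : T X → X → V) (b : T Y → Y → V) (φ : T X → Y → V) : Prop :=
  (∀ 𝔵 y, 𝒯.kleisli φ a 𝔵 y ≤ φ 𝔵 y) ∧ (∀ 𝔵 y, 𝒯.kleisli b φ 𝔵 y ≤ φ 𝔵 y)

variable {𝒯 : TopTheory V T}

/-- `f_* = b · T f`. -/
def modStar {X Y : Type u} (b : 𝒯.TCatStr Y) (f : X → Y) (𝔵 : T X) (y : Y) : V :=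
  b.rel (𝒯.map f 𝔵) y

/-- `f^* = f° · b`. -/
def modCostar {X Y : Type u} (b : 𝒯.TCatStr Y) (f : X → Y) (𝔶 : T Y) (x : X) : V :=
  b.rel 𝔶 (f x)

/-- The extension `φ ⟜ ψ` of `φ : X ⇸∘ Y` along `ψ : X ⇸∘ Z`, given by
`(φ ⟜ ψ)(𝔷,y) = ⋀_{𝔵 ∈ T X} hom((T_ξ ψ · m_X°)(𝔵,𝔷), φ(𝔵,y))`. -/
def extend (𝒯 : TopTheory V T) {X Y Z : Type u}
    (φ : T X → Y → V) (ψ : T X → Z → V) (𝔷 : T Z) (y : Y) : V :=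
  ⨅ 𝔵 : T X, 𝒯.ihom (⨆ 𝔛 : {𝔛 : T (T X) // 𝒯.m 𝔛 = 𝔵}, 𝒯.Txi ψ 𝔛.1 𝔷) (φ 𝔵 y)

/-- A `𝒯`-functor `f : (X,a) → (Y,b)`. -/
def IsTFunctor {X Y : Type u} (a : 𝒯.TCatStr X) (b : 𝒯.TCatStr Y) (f : X → Y) : Prop :=
  ∀ (𝔵 : T X) (x : X), a.rel 𝔵 x ≤ b.rel (𝒯.map f 𝔵) (f x)

/-- A fully faithful `𝒯`-functor. -/
def FullyFaithful {X Y : Type u} (a : 𝒯.TCatStr X) (b : 𝒯.TCatStr Y) (f : X → Y) : Prop :=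
  ∀ (𝔵 : T X) (x : X), a.rel 𝔵 x = b.rel (𝒯.map f 𝔵) (f x)

/-- The order `f ≤ g ⟺ f^* ≤ g^*` on `𝒯`-functors `X → (Y,b)`. -/
def funLE {X Y : Type u} (b : 𝒯.TCatStr Y) (f g : X → Y) : Prop :=
  ∀ (𝔶 : T Y) (x : X), b.rel 𝔶 (f x) ≤ b.rel 𝔶 (g x)

/-- Equivalence `f ≅ g ⟺ f^* = g^*` of `𝒯`-functors `X → (Y,b)`. -/
def FunEquiv {X Y : Type u} (b : 𝒯.TCatStr Y) (f g : X → Y) : Prop :=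
  ∀ (𝔶 : T Y) (x : X), b.rel 𝔶 (f x) = b.rel 𝔶 (g x)

/-- `f ⊣ g`:  `1_X ≤ g·f` and `f·g ≤ 1_Y`. -/
def IsAdjunction {X Y : Type u} (a : 𝒯.TCatStr X) (b : 𝒯.TCatStr Y)
    (f : X → Y) (g : Y → X) : Prop :=
  (∀ (𝔵 : T X) (x : X), a.rel 𝔵 x ≤ a.rel 𝔵 (g (f x))) ∧
    (∀ (𝔶 : T Y) (y : Y), b.rel 𝔶 (f (g y)) ≤ b.rel 𝔶 y)

/-- A left adjoint `𝒯`-functor. -/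
def IsLeftAdjoint {X Y : Type u} (a : 𝒯.TCatStr X) (b : 𝒯.TCatStr Y) (f : X → Y) : Prop :=
  IsTFunctor a b f ∧ ∃ g : Y → X, IsTFunctor b a g ∧ IsAdjunction a b f g

/-- L-separatedness: equivalent `𝒯`-functors into `X` are equal. -/
def Separated {X : Type u} (a : 𝒯.TCatStr X) : Prop :=
  ∀ (A : Type u) (as : 𝒯.TCatStr A) (f g : A → X),
    IsTFunctor as a f → IsTFunctor as a g → FunEquiv a f g → f = g

/-- Injectivity with respect to fully faithful `𝒯`-functors. -/
def Injective {X : Type u} (a : 𝒯.TCatStr X) : Prop :=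
  ∀ (A B : Type u) (as : 𝒯.TCatStr A) (bs : 𝒯.TCatStr B) (f : A → X) (i : A → B),
    IsTFunctor as a f → IsTFunctor as bs i → FullyFaithful as bs i →
      ∃ g : B → X, IsTFunctor bs a g ∧ FunEquiv a (g ∘ i) f

/-- `g : Z → X` is the `ψ`-weighted colimit of `h : A → X`, i.e. `g_* = h_* ⟜ ψ`. -/
def IsColimit {X A Z : Type u} (a : 𝒯.TCatStr X) (h : A → X) (ψ : T A → Z → V)
    (g : Z → X) : Prop :=
  ∀ (𝔷 : T Z) (x : X), modStar a g 𝔷 x = 𝒯.extend (modStar a h) ψ 𝔷 x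

/-- Cocompleteness: every weighted diagram has a colimit. -/
def Cocomplete {X : Type u} (a : 𝒯.TCatStr X) : Prop :=
  ∀ (A Z : Type u) (as : 𝒯.TCatStr A) (cs : 𝒯.TCatStr Z) (h : A → X),
    IsTFunctor as a h → ∀ ψ : T A → Z → V, 𝒯.IsTModRel as.rel cs.rel ψ →
      ∃ g : Z → X, IsTFunctor cs a g ∧ IsColimit a h ψ g

/-- Cocontinuity: preservation of all weighted colimits. -/
def Cocontinuous {X Y : Type u} (a : 𝒯.TCatStr X) (b : 𝒯.TCatStr Y) (f : X → Y) : Prop :=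
  ∀ (A Z : Type u) (as : 𝒯.TCatStr A) (cs : 𝒯.TCatStr Z) (h : A → X)
    (ψ : T A → Z → V) (g : Z → X),
    IsTFunctor as a h → 𝒯.IsTModRel as.rel cs.rel ψ → IsTFunctor cs a g →
      IsColimit a h ψ g → IsColimit b (f ∘ h) ψ (f ∘ g)

/-- A presheaf on `(X,a)`: a `𝒯`-module `X ⇸∘ G`, where `G = (1, e_1°)`. -/
def IsPresheaf {X : Type u} (a : 𝒯.TCatStr X) (ψ : T X → V) : Prop :=
  𝒯.IsTModRel a.rel (𝒯.unitRel PUnit) (fun 𝔵 _ => ψ 𝔵)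

/-- The underlying set of the presheaf `𝒯`-category `X̂`. -/
def Hat {X : Type u} (a : 𝒯.TCatStr X) : Type u := {ψ : T X → V // IsPresheaf a ψ}

/-- The `𝒯`-category structure `⟦-,-⟧` of `V^{|X|}`. -/
def powRel (𝒯 : TopTheory V T) (X : Type u) (𝔭 : T (T X → V)) (ψ : T X → V) : V :=
  ⨅ 𝔮 : {q : T ((T X) × (T X → V)) // 𝒯.map Prod.snd q = 𝔭},
    𝒯.ihom (𝒯.xi (𝒯.map (fun p => p.2 p.1) 𝔮.1)) (ψ (𝒯.m (𝒯.map Prod.fst 𝔮.1)))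

/-- `hs` is the `𝒯`-category structure on `X̂` inherited from `V^{|X|}`. -/
def IsHatStr {X : Type u} (a : 𝒯.TCatStr X) (hs : 𝒯.TCatStr (Hat a)) : Prop :=
  ∀ (𝔭 : T (Hat a)) (ψ : Hat a), hs.rel 𝔭 ψ = 𝒯.powRel X (𝒯.map Subtype.val 𝔭) ψ.1

/-- `y` is the Yoneda functor `X → X̂`, `y x = a(-,x)`. -/
def IsYoneda {X : Type u} (a : 𝒯.TCatStr X) (y : X → Hat a) : Prop :=
  ∀ (x : X) (𝔵 : T X), (y x).1 𝔵 = a.rel 𝔵 x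

/-- The underlying map `ψ ↦ ψ ∘ f^*` of `f̂ : X̂ → Ŷ`. -/
def hatMapRel {X Y : Type u} (b : 𝒯.TCatStr Y) (f : X → Y) (ψ : T X → V) (𝔶 : T Y) : V :=
  𝒯.kleisli (fun 𝔵 (_ : PUnit.{u + 1}) => ψ 𝔵) (modCostar b f) 𝔶 PUnit.unit

/-- `fh` is the `𝒯`-functor `f̂ : X̂ → Ŷ`, with underlying map `ψ ↦ ψ ∘ f^*`. -/
def IsHatMap {X Y : Type u} (a : 𝒯.TCatStr X) (b : 𝒯.TCatStr Y) (f : X → Y)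
    (fh : Hat a → Hat b) : Prop :=
  ∀ (ψ : Hat a) (𝔶 : T Y), (fh ψ).1 𝔶 = hatMapRel b f ψ.1 𝔶

/-- An inhabited `𝒯`-module: `k ≤ ⋀_y ⋁_𝔵 φ(𝔵,y)`. -/
def InhabitedMod (𝒯 : TopTheory V T) {X Y : Type u} (φ : T X → Y → V) : Prop :=
  𝒯.unit ≤ ⨅ y : Y, ⨆ 𝔵 : T X, φ 𝔵 y

/-- A dense `𝒯`-functor: `f_*` is inhabited. -/
def Dense {X Y : Type u} (b : 𝒯.TCatStr Y) (f : X → Y) : Prop :=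
  𝒯.InhabitedMod (modStar b f)

/-- The underlying set of `X⁺ = {ψ ∈ X̂ ∣ ψ inhabited}`. -/
def Plus {X : Type u} (a : 𝒯.TCatStr X) : Type u :=
  {ψ : Hat a // 𝒯.InhabitedMod (fun 𝔵 (_ : PUnit.{u + 1}) => ψ.1 𝔵)}

/-- `ps` is the `𝒯`-category structure on `X⁺` inherited from `X̂`. -/
def IsPlusStr {X : Type u} (a : 𝒯.TCatStr X) (hs : 𝒯.TCatStr (Hat a))
    (ps : 𝒯.TCatStr (Plus a)) : Prop :=
  ∀ (𝔭 : T (Plus a)) (ψ : Plus a), ps.rel 𝔭 ψ = hs.rel (𝒯.map Subtype.val 𝔭) ψ.1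

/-- Inhabited-cocompleteness: all colimits with inhabited weights exist. -/
def ICocomplete {X : Type u} (a : 𝒯.TCatStr X) : Prop :=
  ∀ (A Z : Type u) (as : 𝒯.TCatStr A) (cs : 𝒯.TCatStr Z) (h : A → X),
    IsTFunctor as a h → ∀ ψ : T A → Z → V, 𝒯.IsTModRel as.rel cs.rel ψ →
      𝒯.InhabitedMod ψ → ∃ g : Z → X, IsTFunctor cs a g ∧ IsColimit a h ψ g

/-- Inhabited-cocontinuity: preservation of all colimits with inhabited weights. -/
def ICocontinuous {X Y : Type u} (a : 𝒯.TCatStr X) (b : 𝒯.TCatStr Y) (f : X → Y) : Prop :=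
  ∀ (A Z : Type u) (as : 𝒯.TCatStr A) (cs : 𝒯.TCatStr Z) (h : A → X)
    (ψ : T A → Z → V) (g : Z → X),
    IsTFunctor as a h → 𝒯.IsTModRel as.rel cs.rel ψ → 𝒯.InhabitedMod ψ →
      IsTFunctor cs a g → IsColimit a h ψ g → IsColimit b (f ∘ h) ψ (f ∘ g)

theorem tens_iSup (u : V) {ι : Sort*} (f : ι → V) :
    𝒯.tens u (⨆ i, f i) = ⨆ i, 𝒯.tens u (f i) := by
  rw [iSup, 𝒯.tens_sSup, iSup_range]

theorem iSup_tens {ι : Sort*} (f : ι → V) (u : V) :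
    𝒯.tens (⨆ i, f i) u = ⨆ i, 𝒯.tens (f i) u := by
  simp only [𝒯.tens_comm _ u, tens_iSup]

theorem tens_unit (v : V) : 𝒯.tens v 𝒯.unit = v := by
  rw [𝒯.tens_comm, 𝒯.unit_tens]

theorem tens_le_tens_left (u : V) {v v' : V} (h : v ≤ v') : 𝒯.tens u v ≤ 𝒯.tens u v' := by
  rw [← sup_eq_right.2 h, sup_eq_iSup, tens_iSup]
  exact le_iSup_of_le true le_rfl

theorem tens_le_tens {u u' v v' : V} (hu : u ≤ u') (hv : v ≤ v') :
    𝒯.tens u v ≤ 𝒯.tens u' v' := by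
  refine (tens_le_tens_left u hv).trans ?_
  rw [𝒯.tens_comm u, 𝒯.tens_comm u']
  exact tens_le_tens_left v' hu

theorem le_ihom_iff {u z w : V} : z ≤ 𝒯.ihom u w ↔ 𝒯.tens u z ≤ w := by
  refine ⟨fun h => (tens_le_tens_left u h).trans ?_, fun h => le_sSup h⟩
  rw [ihom, sSup_eq_iSup', tens_iSup]
  exact iSup_le fun z => z.2

theorem ihom_le_ihom_right (u : V) {w w' : V} (h : w ≤ w') : 𝒯.ihom u w ≤ 𝒯.ihom u w' :=
  sSup_le_sSup fun _ hz => le_trans hz h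

@[simp]
theorem map_map {A B C : Type u} (g : B → C) (f : A → B) (𝔞 : T A) :
    𝒯.map g (𝒯.map f 𝔞) = 𝒯.map (fun x => g (f x)) 𝔞 :=
  (𝒯.map_comp g f 𝔞).symm

@[simp]
theorem map_id_apply {A : Type u} (𝔞 : T A) : 𝒯.map (fun x => x) 𝔞 = 𝔞 :=
  congrFun 𝒯.map_id 𝔞

theorem xi_map_tens {A : Type u} (f g : A → V) (𝔞 : T A) :
    𝒯.xi (𝒯.map (fun x => 𝒯.tens (f x) (g x)) 𝔞) =
      𝒯.tens (𝒯.xi (𝒯.map f 𝔞)) (𝒯.xi (𝒯.map g 𝔞)) := by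
  simpa only [map_map] using 𝒯.xi_tens (𝒯.map (fun x => (f x, g x)) 𝔞)

theorem le_Txi {X Y : Type u} (r : X → Y → V) (𝔴 : T (X × Y)) :
    𝒯.xi (𝒯.map (fun p => r p.1 p.2) 𝔴) ≤
      𝒯.Txi r (𝒯.map Prod.fst 𝔴) (𝒯.map Prod.snd 𝔴) :=
  le_iSup_of_le ⟨𝔴, rfl, rfl⟩ le_rfl

theorem powRel_mono {X : Type u} (𝔭 : T (T X → V)) {ψ ψ' : T X → V}
    (h : ∀ 𝔵, ψ 𝔵 ≤ ψ' 𝔵) : 𝒯.powRel X 𝔭 ψ ≤ 𝒯.powRel X 𝔭 ψ' :=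
  iInf_mono fun _ => ihom_le_ihom_right _ (h _)

theorem xi_tens_powRel_le {X : Type u} (𝔮 : T (T X × (T X → V))) (ψ : T X → V) :
    𝒯.tens (𝒯.xi (𝒯.map (fun p => p.2 p.1) 𝔮)) (𝒯.powRel X (𝒯.map Prod.snd 𝔮) ψ) ≤
      ψ (𝒯.m (𝒯.map Prod.fst 𝔮)) :=
  le_ihom_iff.1 (iInf_le_of_le ⟨𝔮, rfl⟩ le_rfl)

/-- Reflexivity of `⟦-,-⟧` at `φ` makes `φ` lax for the algebra structure:
`ξ · T φ ≤ φ · m_X`. -/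
theorem xi_map_le_of_unit_le_powRel {X : Type u} {φ : T X → V}
    (hφ : 𝒯.unit ≤ 𝒯.powRel X (𝒯.e φ) φ) (𝔴 : T (T X × PUnit.{u + 1}))
    (h𝔴 : 𝒯.map Prod.snd 𝔴 = 𝒯.e PUnit.unit) :
    𝒯.xi (𝒯.map (fun p => φ p.1) 𝔴) ≤ φ (𝒯.m (𝒯.map Prod.fst 𝔴)) := by
  have hconst : 𝒯.map (fun _ => φ) 𝔴 = 𝒯.e φ := by
    rw [← 𝒯.e_nat (fun _ => φ), ← h𝔴, map_map]
  have h := xi_tens_powRel_le (𝒯 := 𝒯) (𝒯.map (fun p => (p.1, φ)) 𝔴) φ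
  simp only [map_map, hconst] at h
  calc _ = 𝒯.tens (𝒯.xi (𝒯.map (fun p => φ p.1) 𝔴)) 𝒯.unit := (tens_unit _).symm
    _ ≤ _ := (tens_le_tens_left _ hφ).trans h

theorem kleisli_unitRel_le_of_unit_le_powRel {X : Type u} {φ : T X → V}
    (hφ : 𝒯.unit ≤ 𝒯.powRel X (𝒯.e φ) φ) (𝔵 : T X) (y : PUnit.{u + 1}) :
    𝒯.kleisli (𝒯.unitRel PUnit) (fun 𝔶 (_ : PUnit) => φ 𝔶) 𝔵 y ≤ φ 𝔵 := by
  refine iSup_le ?_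
  rintro ⟨𝔛, rfl⟩
  refine iSup_le fun 𝔲 => ?_
  rw [unitRel, tens_iSup]
  refine iSup_le fun h𝔲 => ?_
  rw [tens_unit, Txi]
  refine iSup_le ?_
  rintro ⟨𝔴, h𝔴 : 𝒯.map Prod.fst 𝔴 = 𝔛, rfl⟩
  subst h𝔴
  exact xi_map_le_of_unit_le_powRel hφ 𝔴 h𝔲

namespace TCatStr

variable {X : Type u} (a : 𝒯.TCatStr X)

/-- The relation `r = T_ξ a · m_X°` on `T X`. -/
def liftRel (𝔵 𝔶 : T X) : V :=
  ⨆ 𝔛 : {𝔛 : T (T X) // 𝒯.m 𝔛 = 𝔵}, 𝒯.Txi a.rel 𝔛.1 𝔶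

/-- The underlying function of the left adjoint `R_X : V^{|X|} → X̂`. -/
def reflect (ψ : T X → V) (𝔵 : T X) : V :=
  ⨆ 𝔶 : T X, 𝒯.tens (ψ 𝔶) (a.liftRel 𝔵 𝔶)

theorem le_liftRel (𝔴 : T (T X × X)) :
    𝒯.xi (𝒯.map (fun p => a.rel p.1 p.2) 𝔴) ≤
      a.liftRel (𝒯.m (𝒯.map Prod.fst 𝔴)) (𝒯.map Prod.snd 𝔴) :=
  le_iSup_of_le ⟨_, rfl⟩ (le_Txi a.rel 𝔴)

theorem unit_le_liftRel (𝔵 : T X) : 𝒯.unit ≤ a.liftRel 𝔵 𝔵 := by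
  have h := a.le_liftRel (𝒯.map (fun x => (𝒯.e x, x)) 𝔵)
  simp only [map_map, 𝒯.m_map_e, map_id_apply] at h
  calc 𝒯.unit = 𝒯.xi (𝒯.map (fun _ => 𝒯.unit) 𝔵) := (𝒯.xi_unit 𝔵).symm
    _ ≤ 𝒯.xi (𝒯.map (fun x => a.rel (𝒯.e x) x) 𝔵) := 𝒯.xi_mono _ _ a.le_refl 𝔵
    _ ≤ a.liftRel 𝔵 𝔵 := h

theorem xi_tens_rel_le (𝔴 : T (T X × X)) (x : X) :
    𝒯.tens (𝒯.xi (𝒯.map (fun p => a.rel p.1 p.2) 𝔴)) (a.rel (𝒯.map Prod.snd 𝔴) x) ≤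
      a.rel (𝒯.m (𝒯.map Prod.fst 𝔴)) x := by
  refine (tens_le_tens (le_Txi a.rel 𝔴) le_rfl).trans (le_trans ?_ (a.comp _ x))
  exact le_iSup_of_le ⟨_, rfl⟩ (le_iSup_of_le (𝒯.map Prod.snd 𝔴) le_rfl)

/-- Transitivity of `r`, in the elementary form: the two `T (T X × X)`-witnesses are glued
into one by the (BC) conditions, and `a ∘ a ≤ a` is applied under `ξ`. -/
theorem xi_tens_xi_le_liftRel (𝔴 𝔴' : T (T X × X))
    (h : 𝒯.m (𝒯.map Prod.fst 𝔴') = 𝒯.map Prod.snd 𝔴) :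
    𝒯.tens (𝒯.xi (𝒯.map (fun p => a.rel p.1 p.2) 𝔴))
        (𝒯.xi (𝒯.map (fun p => a.rel p.1 p.2) 𝔴')) ≤
      a.liftRel (𝒯.m (𝒯.map Prod.fst 𝔴)) (𝒯.map Prod.snd 𝔴') := by
  obtain ⟨𝔚, h𝔚, rfl⟩ := 𝒯.m_bc Prod.snd _ 𝔴 h
  obtain ⟨𝔘, rfl, rfl⟩ := 𝒯.map_bc (𝒯.map Prod.snd) Prod.fst 𝔚 𝔴' h𝔚
  calc _ = 𝒯.xi (𝒯.map (fun u => 𝒯.tens (𝒯.xi (𝒯.map (fun p => a.rel p.1 p.2) u.1.1))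
          (a.rel u.1.2.1 u.1.2.2)) 𝔘) := by
        rw [xi_map_tens, 𝒯.m_nat, 𝒯.xi_m]
        simp only [map_map]
    _ ≤ 𝒯.xi (𝒯.map (fun u => a.rel (𝒯.m (𝒯.map Prod.fst u.1.1)) u.1.2.2) 𝔘) :=
        𝒯.xi_mono _ _ (fun u => u.2 ▸ a.xi_tens_rel_le u.1.1 u.1.2.2) 𝔘
    _ ≤ _ := by
        have h := a.le_liftRel (𝒯.map (fun u => (𝒯.m (𝒯.map Prod.fst u.1.1), u.1.2.2)) 𝔘)
        rw [𝒯.m_nat, 𝒯.m_assoc]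
        simpa only [map_map] using h

theorem xi_tens_liftRel_le (𝔴 : T (T X × X)) (𝔷 : T X) :
    𝒯.tens (𝒯.xi (𝒯.map (fun p => a.rel p.1 p.2) 𝔴)) (a.liftRel (𝒯.map Prod.snd 𝔴) 𝔷) ≤
      a.liftRel (𝒯.m (𝒯.map Prod.fst 𝔴)) 𝔷 := by
  rw [liftRel, tens_iSup]
  refine iSup_le fun ⟨𝔜, h𝔜⟩ => ?_
  rw [Txi, tens_iSup]
  exact iSup_le fun ⟨𝔴', h₁, h₂⟩ => h₂ ▸ a.xi_tens_xi_le_liftRel 𝔴 𝔴' (h₁ ▸ h𝔜)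

theorem xi_tens_reflect_le (𝔴 : T (T X × X)) (ψ : T X → V) :
    𝒯.tens (𝒯.xi (𝒯.map (fun p => a.rel p.1 p.2) 𝔴)) (a.reflect ψ (𝒯.map Prod.snd 𝔴)) ≤
      a.reflect ψ (𝒯.m (𝒯.map Prod.fst 𝔴)) := by
  rw [reflect, tens_iSup]
  refine iSup_mono fun 𝔷 => ?_
  rw [← 𝒯.tens_assoc, 𝒯.tens_comm _ (ψ 𝔷), 𝒯.tens_assoc]
  exact tens_le_tens_left _ (a.xi_tens_liftRel_le 𝔴 𝔷)

theorem kleisli_reflect_le (ψ : T X → V) (𝔵 : T X) (y : PUnit.{u + 1}) :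
    𝒯.kleisli (fun 𝔶 (_ : PUnit) => a.reflect ψ 𝔶) a.rel 𝔵 y ≤ a.reflect ψ 𝔵 := by
  refine iSup_le ?_
  rintro ⟨𝔛, rfl⟩
  refine iSup_le fun 𝔶 => ?_
  rw [Txi, iSup_tens]
  refine iSup_le ?_
  rintro ⟨𝔴, h𝔴 : 𝒯.map Prod.fst 𝔴 = 𝔛, rfl⟩
  subst h𝔴
  exact a.xi_tens_reflect_le 𝔴 ψ

theorem isPresheaf_reflect {ψ : T X → V}
    (h : 𝒯.unit ≤ 𝒯.powRel X (𝒯.e (a.reflect ψ)) (a.reflect ψ)) :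
    IsPresheaf a (a.reflect ψ) :=
  ⟨a.kleisli_reflect_le ψ, kleisli_unitRel_le_of_unit_le_powRel h⟩

theorem le_reflect (ψ : T X → V) (𝔵 : T X) : ψ 𝔵 ≤ a.reflect ψ 𝔵 :=
  le_iSup_of_le 𝔵 <| (tens_unit _).symm.trans_le <| tens_le_tens_left _ (a.unit_le_liftRel 𝔵)

theorem reflect_le_of_isPresheaf {φ : T X → V} (hφ : IsPresheaf a φ) (𝔵 : T X) :
    a.reflect φ 𝔵 ≤ φ 𝔵 := by
  refine iSup_le fun 𝔶 => ?_
  rw [𝒯.tens_comm, liftRel, iSup_tens]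
  refine iSup_le fun 𝔛 => le_trans ?_ (hφ.1 𝔵 .unit)
  exact le_iSup_of_le 𝔛 (le_iSup_of_le 𝔶 le_rfl)

/-- `R_X ψ 𝔵` as a supremum over a fibre of `(𝔴, ψ) ↦ (m_X (T π₁ 𝔴), ψ)`, the shape in which
naturality of `ξ_X` lets `ξ` pass through it. -/
theorem reflect_eq_iSup_fiber (p : T X × (T X → V)) :
    a.reflect p.2 p.1 = ⨆ d : {d : T (T X × X) × (T X → V) //
        (𝒯.m (𝒯.map Prod.fst d.1), d.2) = p},
      𝒯.tens (d.1.2 (𝒯.map Prod.snd d.1.1)) (𝒯.xi (𝒯.map (fun q => a.rel q.1 q.2) d.1.1)) := by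
  refine le_antisymm (iSup_le fun 𝔶 => ?_) (iSup_le ?_)
  · rw [liftRel, tens_iSup]
    refine iSup_le ?_
    rintro ⟨𝔛, h𝔛⟩
    rw [Txi, tens_iSup]
    refine iSup_le ?_
    rintro ⟨𝔴, h𝔴 : 𝒯.map Prod.fst 𝔴 = 𝔛, rfl⟩
    exact le_iSup_of_le ⟨(𝔴, p.2), by rw [h𝔴, h𝔛]⟩ le_rfl
  · rintro ⟨⟨𝔴, ψ⟩, rfl⟩
    exact le_iSup_of_le (𝒯.map Prod.snd 𝔴) (tens_le_tens_left _ (a.le_liftRel 𝔴))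

theorem xi_fiber_tens_powRel_le (𝔓 : T (T (T X × X) × (T X → V))) (φ : T X → V) :
    𝒯.tens (𝒯.xi (𝒯.map (fun d => 𝒯.tens (d.2 (𝒯.map Prod.snd d.1))
        (𝒯.xi (𝒯.map (fun q => a.rel q.1 q.2) d.1))) 𝔓))
      (𝒯.powRel X (𝒯.map Prod.snd 𝔓) φ) ≤
      a.reflect φ (𝒯.m (𝒯.map (fun d => 𝒯.m (𝒯.map Prod.fst d.1)) 𝔓)) := by
  have hev := xi_tens_powRel_le (𝒯 := 𝒯) (𝒯.map (fun d => (𝒯.map Prod.snd d.1, d.2)) 𝔓) φ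
  have hr := a.le_liftRel (𝒯.m (𝒯.map Prod.fst 𝔓))
  simp only [map_map] at hev
  simp only [𝒯.m_nat, 𝒯.xi_m, 𝒯.m_assoc, map_map] at hr
  rw [xi_map_tens, 𝒯.tens_assoc, 𝒯.tens_comm _ (𝒯.powRel _ _ _), ← 𝒯.tens_assoc]
  exact (tens_le_tens hev hr).trans (le_iSup (fun 𝔶 => 𝒯.tens (φ 𝔶) (a.liftRel _ 𝔶)) _)

theorem xi_reflect_tens_powRel_le (𝔶 : T (T X × (T X → V))) (φ : T X → V) :
    𝒯.tens (𝒯.xi (𝒯.map (fun p => a.reflect p.2 p.1) 𝔶)) (𝒯.powRel X (𝒯.map Prod.snd 𝔶) φ) ≤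
      a.reflect φ (𝒯.m (𝒯.map Prod.fst 𝔶)) := by
  have hnat := 𝒯.xi_nat (fun d : T (T X × X) × (T X → V) => (𝒯.m (𝒯.map Prod.fst d.1), d.2))
    (fun d => 𝒯.tens (d.2 (𝒯.map Prod.snd d.1)) (𝒯.xi (𝒯.map (fun q => a.rel q.1 q.2) d.1))) 𝔶
  rw [funext a.reflect_eq_iSup_fiber, ← hnat, iSup_tens]
  refine iSup_le ?_
  rintro ⟨𝔓, rfl⟩
  simpa only [map_map] using a.xi_fiber_tens_powRel_le 𝔓 φ

theorem powRel_le_powRel_map_reflect (𝔭 : T (T X → V)) (φ : T X → V) :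
    𝒯.powRel X 𝔭 φ ≤ 𝒯.powRel X (𝒯.map a.reflect 𝔭) (a.reflect φ) := by
  refine le_iInf ?_
  rintro ⟨𝔮, h𝔮⟩
  rw [le_ihom_iff]
  obtain ⟨𝔴, rfl, rfl⟩ := 𝒯.map_bc Prod.snd a.reflect 𝔮 𝔭 h𝔮
  have h := a.xi_reflect_tens_powRel_le (𝒯.map (fun u => (u.1.1.1, u.1.2)) 𝔴) φ
  simp only [map_map] at h ⊢
  have hev : 𝒯.map (fun u => u.1.1.2 u.1.1.1) 𝔴 = 𝒯.map (fun u => a.reflect u.1.2 u.1.1.1) 𝔴 :=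
    congrArg (𝒯.map · 𝔴) (funext fun u => congrFun u.2 _)
  rwa [hev]

end TCatStr

/-- Corollary 3.2. For every `𝒯`-category `(X,a)`, the inclusion
`𝒯`-functor `i_X : X̂ ↪ V^{|X|}` has a left adjoint `R_X : V^{|X|} → X̂` given by
`R_X(ψ)(𝔵) = ⋁_{𝔶 ∈ T X} ψ(𝔶) ⊗ r(𝔵,𝔶)` where `r = T_ξ a · m_X°`. -/
theorem statement16 (𝒯 : TopTheory V T) {X : Type u} (a : 𝒯.TCatStr X)
    (ps : 𝒯.TCatStr (T X → V)) (hps : ∀ (𝔭 : T (T X → V)) (ψ : T X → V),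
      ps.rel 𝔭 ψ = 𝒯.powRel X 𝔭 ψ)
    (hs : 𝒯.TCatStr (Hat a)) (hhs : IsHatStr a hs) :
    ∃ R : (T X → V) → Hat a,
      (∀ (ψ : T X → V) (𝔵 : T X),
        (R ψ).1 𝔵 = ⨆ 𝔶 : T X, 𝒯.tens (ψ 𝔶)
          (⨆ 𝔛 : {𝔛 : T (T X) // 𝒯.m 𝔛 = 𝔵}, 𝒯.Txi a.rel 𝔛.1 𝔶)) ∧
      IsTFunctor ps hs R ∧ IsTFunctor hs ps Subtype.val ∧
      IsAdjunction ps hs R Subtype.val := by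
  have hR : ∀ ψ, IsPresheaf a (a.reflect ψ) := fun ψ =>
    a.isPresheaf_reflect ((ps.le_refl _).trans_eq (hps _ _))
  let R : (T X → V) → Hat a := fun ψ => ⟨a.reflect ψ, hR ψ⟩
  refine ⟨R, fun _ _ => rfl, fun 𝔭 ψ => ?_, fun 𝔭 φ => ?_, fun 𝔭 ψ => ?_, fun 𝔭 φ => ?_⟩
  · rw [hps, hhs]
    exact (a.powRel_le_powRel_map_reflect 𝔭 ψ).trans_eq
      (congrArg (𝒯.powRel X · _) (map_map Subtype.val R 𝔭).symm)
  · exact (hhs 𝔭 φ).trans_le (hps _ _).ge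
  · rw [hps, hps]
    exact powRel_mono 𝔭 (a.le_reflect ψ)
  · rw [hhs, hhs]
    exact powRel_mono _ (a.reflect_le_of_isPresheaf φ.2)

end TopTheory

end Paper
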